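/- For the softmax map p_i(s) = exp(s_i)/Σ_j exp(s_j) on R^C, the Jacobian J(s) = diag(p) - p p^T is symmetric positive semidefinite, and its spectral norm satisfies ‖J(s)‖₂ ≤ 1/2 for all s ∈ R^C. -/

import Mathlib

open Matrix Real Finset

/-- Softmax probability vector. -/
noncomputable def softmaxVec {C : ℕ} (s : Fin C → ℝ) : Fin C → ℝ :=
  fun i => Real.exp (s i) / ∑ j, Real.exp (s j)

/-- Softmax Jacobian `diag p - p pᵀ`. -/
noncomputable def softmaxJac {C : ℕ} (s : Fin C → ℝ) : Matrix (Fin C) (Fin C) ℝ :=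
  Matrix.diagonal (softmaxVec s) - Matrix.vecMulVec (softmaxVec s) (softmaxVec s)

/-! The quadratic form of `J = diag p - p pᵀ` is `∑ pᵢ xᵢ² - (∑ pᵢ xᵢ)²`, the variance of `x`
under `p`, which is nonnegative by Cauchy–Schwarz. For the upper bound, row `i` of `J` has
absolute sum `pᵢ (1 - pᵢ) + ∑_{j ≠ i} pᵢ pⱼ = 2 pᵢ (1 - pᵢ) ≤ 1/2`, and by `2 |xᵢ xⱼ| ≤ xᵢ² + xⱼ²`
(the Schur test) a matrix whose absolute row and column sums are at most `r` has quadratic form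
at most `r ‖x‖²`. -/

theorem dotProduct_mulVec_le_of_abs_row_col_sum_le {ι : Type*} [Fintype ι] (A : Matrix ι ι ℝ)
    {r : ℝ} (hrow : ∀ i, ∑ j, |A i j| ≤ r) (hcol : ∀ j, ∑ i, |A i j| ≤ r) (x : ι → ℝ) :
    x ⬝ᵥ A *ᵥ x ≤ r * ∑ i, x i ^ 2 := by
  have hterm : ∀ i j, x i * (A i j * x j) ≤ |A i j| * x i ^ 2 / 2 + |A i j| * x j ^ 2 / 2 := by
    intro i j
    calc x i * (A i j * x j) = A i j * (x i * x j) := by ring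
      _ ≤ |A i j| * |x i * x j| := by rw [← abs_mul]; exact le_abs_self _
      _ ≤ |A i j| * ((x i ^ 2 + x j ^ 2) / 2) := by
          gcongr
          rw [abs_le]; constructor <;> nlinarith [sq_nonneg (x i + x j), sq_nonneg (x i - x j)]
      _ = _ := by ring
  have hrows : ∑ i, ∑ j, |A i j| * x i ^ 2 / 2 ≤ r / 2 * ∑ i, x i ^ 2 := by
    rw [mul_sum]
    refine sum_le_sum fun i _ => ?_
    rw [← sum_div, ← sum_mul]
    linarith [mul_le_mul_of_nonneg_right (hrow i) (sq_nonneg (x i))]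
  have hcols : ∑ i, ∑ j, |A i j| * x j ^ 2 / 2 ≤ r / 2 * ∑ j, x j ^ 2 := by
    rw [sum_comm, mul_sum]
    refine sum_le_sum fun j _ => ?_
    rw [← sum_div, ← sum_mul]
    linarith [mul_le_mul_of_nonneg_right (hcol j) (sq_nonneg (x j))]
  calc x ⬝ᵥ A *ᵥ x = ∑ i, ∑ j, x i * (A i j * x j) := by
        simp only [dotProduct, mulVec, mul_sum]
    _ ≤ ∑ i, ∑ j, (|A i j| * x i ^ 2 / 2 + |A i j| * x j ^ 2 / 2) :=
        sum_le_sum fun i _ => sum_le_sum fun j _ => hterm i j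
    _ ≤ r * ∑ i, x i ^ 2 := by
        simp only [sum_add_distrib]; linarith

section

variable {ι : Type*} [DecidableEq ι] (p : ι → ℝ)

theorem isSymm_diagonal_sub_vecMulVec : (diagonal p - vecMulVec p p).IsSymm := by
  simp [IsSymm, transpose_sub]

variable [Fintype ι]

theorem dotProduct_mulVec_diagonal_sub_vecMulVec (x : ι → ℝ) :
    x ⬝ᵥ (diagonal p - vecMulVec p p) *ᵥ x = ∑ i, p i * x i ^ 2 - (∑ i, p i * x i) ^ 2 := by
  rw [sub_mulVec, vecMulVec_mulVec, dotProduct_sub, op_smul_eq_smul, dotProduct_smul, smul_eq_mul,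
    dotProduct_comm x p, sq]
  simp only [dotProduct, mulVec_diagonal]
  congr 1
  exact sum_congr rfl fun i _ => by ring

theorem posSemidef_diagonal_sub_vecMulVec (hp : ∀ i, 0 ≤ p i) (hsum : ∑ i, p i ≤ 1) :
    (diagonal p - vecMulVec p p).PosSemidef := by
  refine posSemidef_iff_dotProduct_mulVec.mpr
    ⟨isHermitian_iff_isSymm.mpr (isSymm_diagonal_sub_vecMulVec p), fun x => ?_⟩
  rw [star_trivial, dotProduct_mulVec_diagonal_sub_vecMulVec, sub_nonneg]
  have hcs : (∑ i, p i * x i) ^ 2 ≤ (∑ i, p i) * ∑ i, p i * x i ^ 2 :=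
    sum_sq_le_sum_mul_sum_of_sq_le_mul _ (fun i _ => hp i)
      (fun i _ => mul_nonneg (hp i) (sq_nonneg _)) (fun i _ => le_of_eq (by ring))
  exact hcs.trans <|
    mul_le_of_le_one_left (sum_nonneg fun i _ => mul_nonneg (hp i) (sq_nonneg _)) hsum

theorem sum_abs_diagonal_sub_vecMulVec (hp : ∀ i, 0 ≤ p i) (hsum : ∑ i, p i = 1) (i : ι) :
    ∑ j, |(diagonal p - vecMulVec p p) i j| = 2 * p i * (1 - p i) := by
  have hpi : p i ≤ 1 := hsum ▸ single_le_sum (fun j _ => hp j) (mem_univ i)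
  rw [← add_sum_erase _ _ (mem_univ i)]
  have hoff : ∀ j ∈ univ.erase i, |(diagonal p - vecMulVec p p) i j| = p i * p j := by
    intro j hj
    simp [diagonal_apply_ne _ (ne_of_mem_erase hj).symm, vecMulVec_apply, abs_mul,
      abs_of_nonneg (hp _)]
  have hdiag : (diagonal p - vecMulVec p p) i i = p i * (1 - p i) := by
    simp [vecMulVec_apply, mul_sub]
  rw [sum_congr rfl hoff, ← mul_sum, sum_erase_eq_sub (mem_univ i), hsum, hdiag,
    abs_of_nonneg (mul_nonneg (hp i) (sub_nonneg.mpr hpi))]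
  ring

theorem dotProduct_mulVec_diagonal_sub_vecMulVec_le_half (hp : ∀ i, 0 ≤ p i)
    (hsum : ∑ i, p i = 1) (x : ι → ℝ) :
    x ⬝ᵥ (diagonal p - vecMulVec p p) *ᵥ x ≤ 1 / 2 * ∑ i, x i ^ 2 := by
  have hrow : ∀ i, ∑ j, |(diagonal p - vecMulVec p p) i j| ≤ 1 / 2 := fun i => by
    rw [sum_abs_diagonal_sub_vecMulVec p hp hsum]
    nlinarith [sq_nonneg (2 * p i - 1)]
  refine dotProduct_mulVec_le_of_abs_row_col_sum_le _ hrow (fun j => ?_) x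
  simpa only [(isSymm_diagonal_sub_vecMulVec p).apply] using hrow j

end

theorem softmaxVec_nonneg {C : ℕ} (s : Fin C → ℝ) (i : Fin C) : 0 ≤ softmaxVec s i :=
  div_nonneg (exp_pos _).le (sum_nonneg fun _ _ => (exp_pos _).le)

theorem sum_softmaxVec {C : ℕ} (hC : 1 ≤ C) (s : Fin C → ℝ) : ∑ i, softmaxVec s i = 1 := by
  have : Nonempty (Fin C) := Fin.pos_iff_nonempty.mp hC
  simp only [softmaxVec]
  rw [← sum_div, div_self (sum_pos (fun j _ => exp_pos (s j)) univ_nonempty).ne']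

/-- The softmax Jacobian is symmetric, positive semidefinite, and its Rayleigh
quotients over unit vectors are bounded by `1/2` (spectral norm `≤ 1/2`). -/
theorem softmax_jacobian_psd_and_spectral_norm_le_half
    {C : ℕ} (hC : 1 ≤ C) (s : Fin C → ℝ) :
    (softmaxJac s).IsSymm ∧ (softmaxJac s).PosSemidef ∧
      ∀ x : Fin C → ℝ, ∑ i, (x i) ^ 2 = 1 →
        x ⬝ᵥ (softmaxJac s).mulVec x ≤ 1 / 2 := by
  have hp := softmaxVec_nonneg s
  have hsum := sum_softmaxVec hC s
  refine ⟨isSymm_diagonal_sub_vecMulVec _, posSemidef_diagonal_sub_vecMulVec _ hp hsum.le,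
    fun x hx => ?_⟩
  have hbound := dotProduct_mulVec_diagonal_sub_vecMulVec_le_half _ hp hsum x
  rwa [hx, mul_one] at hbound
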